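/- arXiv:2401.09287 — 4 statements merged into one kernel-verified Lean document; each statement's English description precedes it below -/
import Mathlib

section
/- Let A = (a_ij) be an n×n symmetrically reciprocal matrix with positive entries. A positive vector x ∈ ℝⁿ minimizes the function f(x) = ∑_{i,j} (log a_ij − log x_i + log x_j)² over all positive vectors if and only if there exists u > 0 such that x_i = u·(∏_{j=1}^{n} a_ij)^{1/n} for every i. In particular, the geometric-mean vector with entries (∏_{j=1}^{n} a_ij)^{1/n} is a minimizer, and all minimizers are its positive scalar multiples. -/
/-!
Write `B i j = log a_ij` (skew-symmetric by reciprocity) and `e i = log x_i`, and let `g` be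
the vector of row means of `B`. The residual `r i j = B i j - g i + g j` has vanishing row and
column sums, so the cross terms drop out of the expansion of the objective:
`∑ (B i j - e i + e j)² = ∑ r i j² + ∑ ((e - g) i - (e - g) j)²`.
The objective is therefore minimal exactly when `e - g` is constant, i.e. when `x` is a positive
multiple of `exp ∘ g`, which is the geometric-mean vector.
-/

open Finset Real

section ConsistencyError

variable {ι : Type*} [Fintype ι]

/-- With `B = log A` and `e = log x`, this is the squared log-Euclidean distance from `A` to the
consistent matrix `(x i / x j)`. -/
def consistencyError (B : ι → ι → ℝ) (e : ι → ℝ) : ℝ :=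
  ∑ i, ∑ j, (B i j - e i + e j) ^ 2

noncomputable def rowMean (B : ι → ι → ℝ) (i : ι) : ℝ :=
  (∑ j, B i j) / Fintype.card ι

theorem sum_sum_sub_add_sq_of_sum_eq_zero (r : ι → ι → ℝ) (hrow : ∀ i, ∑ j, r i j = 0)
    (hcol : ∀ j, ∑ i, r i j = 0) (e : ι → ℝ) :
    ∑ i, ∑ j, (r i j - e i + e j) ^ 2 =
      ∑ i, ∑ j, r i j ^ 2 + ∑ i, ∑ j, (e i - e j) ^ 2 := by
  have hrow' : ∑ i, ∑ j, e i * r i j = 0 := by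
    simp [← mul_sum, hrow]
  have hcol' : ∑ i, ∑ j, e j * r i j = 0 := by
    rw [sum_comm]
    simp [← mul_sum, hcol]
  calc ∑ i, ∑ j, (r i j - e i + e j) ^ 2
      = ∑ i, ∑ j, (r i j ^ 2 + (e i - e j) ^ 2 - 2 * (e i * r i j) + 2 * (e j * r i j)) := by
        congr! 2 with i _ j _
        ring
    _ = ∑ i, ∑ j, r i j ^ 2 + ∑ i, ∑ j, (e i - e j) ^ 2
          - 2 * ∑ i, ∑ j, e i * r i j + 2 * ∑ i, ∑ j, e j * r i j := by
        simp only [sum_add_distrib, sum_sub_distrib, mul_sum]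
    _ = ∑ i, ∑ j, r i j ^ 2 + ∑ i, ∑ j, (e i - e j) ^ 2 := by
        rw [hrow', hcol']
        ring

theorem sum_sum_sub_sq_eq_zero_iff (e : ι → ℝ) :
    ∑ i, ∑ j, (e i - e j) ^ 2 = 0 ↔ ∃ c, ∀ i, e i = c := by
  constructor
  · intro h
    rcases isEmpty_or_nonempty ι with hι | ⟨⟨i₀⟩⟩
    · exact ⟨0, hι.elim⟩
    have hsq := (sum_eq_zero_iff_of_nonneg fun i _ ↦
      sum_nonneg fun j _ ↦ sq_nonneg (e i - e j)).1 h
    refine ⟨e i₀, fun i ↦ ?_⟩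
    have := (sum_eq_zero_iff_of_nonneg fun j _ ↦ sq_nonneg (e i - e j)).1
      (hsq i (mem_univ i)) i₀ (mem_univ i₀)
    exact sub_eq_zero.1 (pow_eq_zero_iff two_ne_zero |>.1 this)
  · rintro ⟨c, hc⟩
    simp [hc]

section Skew

variable {B : ι → ι → ℝ} (hB : ∀ i j, B j i = -B i j)
include hB

theorem sum_row_sub_rowMean_add_rowMean_eq_zero (i : ι) :
    ∑ j, (B i j - rowMean B i + rowMean B j) = 0 := by
  have : Nonempty ι := ⟨i⟩
  have hcard : (Fintype.card ι : ℝ) ≠ 0 := Nat.cast_ne_zero.2 Fintype.card_ne_zero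
  have htotal : ∑ i, ∑ j, B i j = 0 := by
    have : ∑ i, ∑ j, B i j = -∑ i, ∑ j, B i j :=
      calc ∑ i, ∑ j, B i j = ∑ j, ∑ i, B i j := sum_comm
        _ = ∑ j, ∑ i, -B j i := by congr! 2 with j _ i _; exact hB j i
        _ = -∑ i, ∑ j, B i j := by simp only [sum_neg_distrib]
    linarith
  simp only [sum_add_distrib, sum_sub_distrib, sum_const, card_univ, nsmul_eq_mul, rowMean,
    ← sum_div, htotal]
  field_simp
  ring

theorem consistencyError_eq_consistencyError_rowMean_add (e : ι → ℝ) :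
    consistencyError B e = consistencyError B (rowMean B)
      + ∑ i, ∑ j, ((e - rowMean B) i - (e - rowMean B) j) ^ 2 := by
  set r := fun i j ↦ B i j - rowMean B i + rowMean B j
  have hrow : ∀ i, ∑ j, r i j = 0 := sum_row_sub_rowMean_add_rowMean_eq_zero hB
  have hcol : ∀ j, ∑ i, r i j = 0 := fun j ↦ by
    rw [← neg_eq_zero, ← sum_neg_distrib, ← hrow j]
    congr! 1 with i
    simp only [r, hB j i]
    ring
  calc consistencyError B e
      = ∑ i, ∑ j, (r i j - (e - rowMean B) i + (e - rowMean B) j) ^ 2 := by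
        unfold consistencyError
        congr! 3 with i _ j _
        simp only [r, Pi.sub_apply]
        ring
    _ = _ := sum_sum_sub_add_sq_of_sum_eq_zero r hrow hcol _

theorem forall_consistencyError_le_iff (e : ι → ℝ) :
    (∀ e', consistencyError B e ≤ consistencyError B e') ↔
      ∃ c, ∀ i, e i = c + rowMean B i := by
  have hdecomp := consistencyError_eq_consistencyError_rowMean_add hB
  have hconst : (∃ c, ∀ i, e i = c + rowMean B i) ↔ ∃ c, ∀ i, (e - rowMean B) i = c := by
    simp only [Pi.sub_apply, sub_eq_iff_eq_add]
  rw [hconst, ← sum_sum_sub_sq_eq_zero_iff]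
  constructor
  · intro hmin
    have := hmin (rowMean B)
    rw [hdecomp e] at this
    exact le_antisymm (by linarith) (by positivity)
  · intro hzero e'
    rw [hdecomp e, hdecomp e', hzero, add_zero, le_add_iff_nonneg_right]
    positivity

end Skew

theorem prod_rpow_inv_card_eq_exp_rowMean {A : ι → ι → ℝ} (hA : ∀ i j, 0 < A i j)
    (i : ι) :
    (∏ j, A i j) ^ ((1 : ℝ) / Fintype.card ι) =
      exp (rowMean (fun i j ↦ log (A i j)) i) := by
  rw [rpow_def_of_pos (prod_pos fun j _ ↦ hA i j), log_prod fun j _ ↦ (hA i j).ne', rowMean,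
    mul_one_div]

end ConsistencyError

theorem exists_eq_mul_exp_iff_exists_log_eq_add {ι : Type*} {x g : ι → ℝ}
    (hx : ∀ i, 0 < x i) :
    (∃ u, 0 < u ∧ ∀ i, x i = u * exp (g i)) ↔ ∃ c, ∀ i, log (x i) = c + g i := by
  constructor
  · rintro ⟨u, hu, hxu⟩
    exact ⟨log u, fun i ↦ by rw [hxu i, log_mul hu.ne' (exp_pos _).ne', log_exp]⟩
  · rintro ⟨c, hc⟩
    exact ⟨exp c, exp_pos c, fun i ↦ by rw [← exp_add, ← hc i, exp_log (hx i)]⟩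

theorem geometric_mean_minimizes_log_euclidean_general (n : ℕ)
    (A : Matrix (Fin n) (Fin n) ℝ) (hA : ∀ i j, 0 < A i j)
    (hrec : ∀ i j, A j i = 1 / A i j)
    (x : Fin n → ℝ) (hx : ∀ i, 0 < x i) :
    (∀ y : Fin n → ℝ, (∀ i, 0 < y i) →
        (∑ i, ∑ j, (Real.log (A i j) - Real.log (x i) + Real.log (x j)) ^ 2) ≤
          (∑ i, ∑ j, (Real.log (A i j) - Real.log (y i) + Real.log (y j)) ^ 2)) ↔
      ∃ u : ℝ, 0 < u ∧ ∀ i, x i = u * (∏ j, A i j) ^ ((1 : ℝ) / n) := by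
  set B : Fin n → Fin n → ℝ := fun i j ↦ log (A i j)
  have hB : ∀ i j, B j i = -B i j := fun i j ↦ by
    simp only [B]
    rw [hrec, one_div, log_inv]
  have hgeom : ∀ i, (∏ j, A i j) ^ ((1 : ℝ) / n) = exp (rowMean B i) := fun i ↦ by
    simpa only [Fintype.card_fin] using prod_rpow_inv_card_eq_exp_rowMean hA i
  have hlog_coords : (∀ y : Fin n → ℝ, (∀ i, 0 < y i) →
        consistencyError B (log ∘ x) ≤ consistencyError B (log ∘ y)) ↔
      ∀ e, consistencyError B (log ∘ x) ≤ consistencyError B e :=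
    ⟨fun h e ↦ by
        simpa only [Function.comp_def, log_exp] using h (exp ∘ e) fun i ↦ exp_pos (e i),
      fun h y _ ↦ h _⟩
  simp only [hgeom, exists_eq_mul_exp_iff_exists_log_eq_add hx]
  exact hlog_coords.trans (forall_consistencyError_le_iff hB _)

/-- For a symmetrically reciprocal positive matrix `A`, a positive vector `x`
minimizes the log-Euclidean approximation error
`∑_{i,j} (log a_ij − log x_i + log x_j)²` over positive vectors if and only if
`x` is a positive multiple of the geometric-mean vector with entries
`(∏_j a_ij)^(1/n)`. -/
theorem geometric_mean_minimizes_log_euclidean (n : ℕ) (hn : 1 ≤ n)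
    (A : Matrix (Fin n) (Fin n) ℝ) (hA : ∀ i j, 0 < A i j)
    (hrec : ∀ i j, A j i = 1 / A i j)
    (x : Fin n → ℝ) (hx : ∀ i, 0 < x i) :
    (∀ y : Fin n → ℝ, (∀ i, 0 < y i) →
        (∑ i, ∑ j, (Real.log (A i j) - Real.log (x i) + Real.log (x j)) ^ 2) ≤
          (∑ i, ∑ j, (Real.log (A i j) - Real.log (y i) + Real.log (y j)) ^ 2)) ↔
      ∃ u : ℝ, 0 < u ∧ ∀ i, x i = u * (∏ j, A i j) ^ ((1 : ℝ) / n) :=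
  geometric_mean_minimizes_log_euclidean_general n A hA hrec x hx
end

section
/- Let A = (a_ij) be an n×n symmetrically reciprocal matrix with positive entries and let x ∈ ℝⁿ be a positive vector. Then the maximum relative approximation error satisfies max_{i,j} |a_ij − x_i/x_j| / a_ij = Δ_A(x) − 1, where Δ_A(x) = max_{i,j} a_ij·x_j/x_i. Consequently, a positive vector minimizes the maximum relative error if and only if it minimizes Δ_A. -/
/-- The maximum relative approximation error of a consistent matrix `(x_i/x_j)`
to a positive matrix `A`. -/
noncomputable def relErr {n : ℕ} (A : Matrix (Fin n) (Fin n) ℝ) (x : Fin n → ℝ) : ℝ :=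
  ⨆ i, ⨆ j, |A i j - x i / x j| / A i j

/-- `Δ_A(x) = max_{i,j} a_ij · x_j / x_i`. -/
noncomputable def tDelta {n : ℕ} (A : Matrix (Fin n) (Fin n) ℝ) (x : Fin n → ℝ) : ℝ :=
  ⨆ i, ⨆ j, A i j * x j / x i

/-!
With `r_ij = a_ij x_j / x_i` the relative error of the entry `(i, j)` is `|r_ij⁻¹ - 1|`.
Reciprocity of `A` makes the family `r` closed under inversion (`r_ji = r_ij⁻¹`), and for
`t > 0` with `t, t⁻¹ ≤ M` one has `|t⁻¹ - 1| ≤ M - 1`, with equality when `t⁻¹ = M`.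
-/

theorem abs_inv_sub_one_le {t M : ℝ} (ht : 0 < t) (htM : t ≤ M) (hinvM : t⁻¹ ≤ M) :
    |t⁻¹ - 1| ≤ M - 1 := by
  have two_le : 2 ≤ t + t⁻¹ := by
    have := mul_inv_cancel₀ ht.ne'
    nlinarith [sq_nonneg (t - 1), inv_pos.2 ht]
  rw [abs_sub_le_iff]
  constructor <;> linarith

theorem ciSup_abs_inv_sub_one {ι : Type*} [Finite ι] [Nonempty ι] {f : ι → ℝ}
    (hpos : ∀ i, 0 < f i) (hinv : ∀ i, ∃ j, f j = (f i)⁻¹) :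
    ⨆ i, |(f i)⁻¹ - 1| = (⨆ i, f i) - 1 := by
  have hf_le : ∀ i, f i ≤ ⨆ i, f i := le_ciSup (Finite.bddAbove_range f)
  apply le_antisymm
  · refine ciSup_le fun i => ?_
    obtain ⟨j, hj⟩ := hinv i
    exact abs_inv_sub_one_le (hpos i) (hf_le i) (hj ▸ hf_le j)
  · obtain ⟨i, hi⟩ := exists_eq_ciSup_of_finite (f := f)
    obtain ⟨j, hj⟩ := hinv i
    have hj' : (f j)⁻¹ = ⨆ i, f i := by rw [hj, inv_inv, hi]
    have hM : 0 < ⨆ i, f i := hi ▸ hpos i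
    have one_le : 1 ≤ ⨆ i, f i := by
      have := hf_le j
      rw [hj, hi] at this
      have := mul_inv_cancel₀ hM.ne'
      nlinarith
    calc (⨆ i, f i) - 1 = |(f j)⁻¹ - 1| := by rw [hj', abs_of_nonneg (by linarith)]
      _ ≤ ⨆ i, |(f i)⁻¹ - 1| := le_ciSup (Finite.bddAbove_range fun i => |(f i)⁻¹ - 1|) j

section

variable {n : ℕ} (A : Matrix (Fin n) (Fin n) ℝ) (x : Fin n → ℝ)

theorem tDelta_eq_ciSup_prod :
    tDelta A x = ⨆ p : Fin n × Fin n, A p.1 p.2 * x p.2 / x p.1 :=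
  (Finite.ciSup_prod (fun p : Fin n × Fin n => A p.1 p.2 * x p.2 / x p.1)).symm

theorem relErr_eq_ciSup_prod (hA : ∀ i j, 0 < A i j) (hx : ∀ i, 0 < x i) :
    relErr A x = ⨆ p : Fin n × Fin n, |(A p.1 p.2 * x p.2 / x p.1)⁻¹ - 1| := by
  rw [Finite.ciSup_prod]
  refine iSup_congr fun i => iSup_congr fun j => ?_
  have := (hA i j).ne'
  have := (hx i).ne'
  have := (hx j).ne'
  rw [← abs_of_pos (hA i j), ← abs_div, abs_of_pos (hA i j), abs_sub_comm, inv_div]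
  congr 1
  field_simp

theorem relErr_eq_tDelta_sub_one (hn : 1 ≤ n) (hA : ∀ i j, 0 < A i j)
    (hrec : ∀ i j, A j i = 1 / A i j) (hx : ∀ i, 0 < x i) :
    relErr A x = tDelta A x - 1 := by
  have : Nonempty (Fin n) := ⟨⟨0, hn⟩⟩
  rw [relErr_eq_ciSup_prod A x hA hx, tDelta_eq_ciSup_prod]
  refine ciSup_abs_inv_sub_one (fun p => div_pos (mul_pos (hA _ _) (hx _)) (hx _))
    fun p => ⟨p.swap, ?_⟩
  simp only [Prod.fst_swap, Prod.snd_swap, hrec p.1 p.2, inv_div]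
  ring

end

/-- For a symmetrically reciprocal positive matrix `A` and a positive vector `x`,
the maximum relative error `max_{i,j} |a_ij − x_i/x_j| / a_ij` equals `Δ_A(x) − 1`;
consequently `x` minimizes the maximum relative error over positive vectors if and
only if it minimizes `Δ_A`. -/
theorem relErr_eq_delta_sub_one (n : ℕ) (hn : 1 ≤ n)
    (A : Matrix (Fin n) (Fin n) ℝ) (hA : ∀ i j, 0 < A i j)
    (hrec : ∀ i j, A j i = 1 / A i j)
    (x : Fin n → ℝ) (hx : ∀ i, 0 < x i) :
    relErr A x = tDelta A x - 1 ∧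
      ((∀ y : Fin n → ℝ, (∀ i, 0 < y i) → relErr A x ≤ relErr A y) ↔
        (∀ y : Fin n → ℝ, (∀ i, 0 < y i) → tDelta A x ≤ tDelta A y)) := by
  have hxErr := relErr_eq_tDelta_sub_one A x hn hA hrec hx
  refine ⟨hxErr, forall₂_congr fun y hy => ?_⟩
  rw [hxErr, relErr_eq_tDelta_sub_one A y hn hA hrec hy, sub_le_sub_iff_right]
end

section
/- Let A = (a_ij) be an n×n symmetrically reciprocal matrix with positive entries. Then the minimum over all positive vectors x ∈ ℝⁿ of the log-Chebyshev approximation error max_{i,j} |log a_ij − log(x_i/x_j)| is attained and equals log λ(A), where λ(A) is the tropical spectral radius of A. -/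
/-- Max-times matrix product: `(A ⊗ B)_ik = max_j a_ij · b_jk`. -/
noncomputable def tMul {n : ℕ} (A B : Matrix (Fin n) (Fin n) ℝ) : Matrix (Fin n) (Fin n) ℝ :=
  fun i k => ⨆ j, A i j * B j k

/-- Max-times matrix powers, with `A^⊗0 = I`. -/
noncomputable def tPow {n : ℕ} (A : Matrix (Fin n) (Fin n) ℝ) : ℕ → Matrix (Fin n) (Fin n) ℝ
  | 0 => fun i j => if i = j then 1 else 0
  | (k + 1) => tMul A (tPow A k)

/-- Tropical trace: `tr A = max_i a_ii`. -/
noncomputable def tTr {n : ℕ} (A : Matrix (Fin n) (Fin n) ℝ) : ℝ :=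
  ⨆ i, A i i

/-- Tropical spectral radius: `λ(A) = max_{1 ≤ k ≤ n} (tr (A^⊗k))^(1/k)`. -/
noncomputable def tRadius {n : ℕ} (A : Matrix (Fin n) (Fin n) ℝ) : ℝ :=
  ⨆ k : Fin n, (tTr (tPow A ((k : ℕ) + 1))) ^ ((1 : ℝ) / ((k : ℕ) + 1))

section helpers

variable {n : ℕ} [Nonempty (Fin n)]
set_option linter.unusedSectionVars false
set_option linter.unusedVariables false

lemma le_fsup (f : Fin n → ℝ) (i : Fin n) : f i ≤ ⨆ j, f j :=
  le_ciSup (Set.Finite.bddAbove (Set.finite_range f)) i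

lemma fsup_exists (f : Fin n → ℝ) : ∃ m, (⨆ j, f j) = f m := by
  obtain ⟨m, hm⟩ := Finite.exists_max f
  exact ⟨m, le_antisymm (ciSup_le hm) (le_fsup f m)⟩

lemma tPow_one {A : Matrix (Fin n) (Fin n) ℝ} (hA : ∀ i j, 0 ≤ A i j) : tPow A 1 = A := by
  funext i j
  show (⨆ m, A i m * (if m = j then (1:ℝ) else 0)) = A i j
  apply le_antisymm
  · apply ciSup_le
    intro m
    by_cases h : m = j
    · subst h; simp
    · simp [h, hA i j]
  · have := le_fsup (fun m => A i m * (if m = j then (1:ℝ) else 0)) j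
    simpa using this

lemma tPow_nonneg {A : Matrix (Fin n) (Fin n) ℝ} (hA : ∀ i j, 0 ≤ A i j) :
    ∀ k i j, 0 ≤ tPow A k i j := by
  intro k
  induction k with
  | zero => intro i j; by_cases h : i = j <;> simp [tPow, h]
  | succ k ih =>
    intro i j
    have := le_fsup (fun m => A i m * tPow A k m j) i
    refine le_trans ?_ this
    exact mul_nonneg (hA i i) (ih i j)

lemma tPow_pos {A : Matrix (Fin n) (Fin n) ℝ} (hA : ∀ i j, 0 < A i j) :
    ∀ k i j, 0 < tPow A (k + 1) i j := by
  intro k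
  induction k with
  | zero => intro i j; rw [tPow_one (fun i j => (hA i j).le)]; exact hA i j
  | succ k ih =>
    intro i j
    have := le_fsup (fun m => A i m * tPow A (k+1) m j) j
    exact lt_of_lt_of_le (mul_pos (hA i j) (ih j j)) this

/-- path weight -/
noncomputable def pw {n : ℕ} (A : Matrix (Fin n) (Fin n) ℝ) (p : ℕ → Fin n) (k : ℕ) : ℝ :=
  ∏ t ∈ Finset.range k, A (p t) (p (t+1))

lemma pw_pos {A : Matrix (Fin n) (Fin n) ℝ} (hA : ∀ i j, 0 < A i j) (p : ℕ → Fin n) (k : ℕ) :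
    0 < pw A p k :=
  Finset.prod_pos (fun t _ => hA _ _)

lemma pw_le_tPow {A : Matrix (Fin n) (Fin n) ℝ} (hA : ∀ i j, 0 ≤ A i j) :
    ∀ (k : ℕ) (p : ℕ → Fin n), pw A p k ≤ tPow A k (p 0) (p k) := by
  intro k
  induction k with
  | zero => intro p; simp [pw, tPow]
  | succ k ih =>
    intro p
    have h1 : pw A p (k+1) = A (p 0) (p 1) * pw A (fun t => p (t+1)) k := by
      unfold pw
      rw [Finset.prod_range_succ']
      ring
    rw [h1]
    have h2 : A (p 0) (p 1) * pw A (fun t => p (t+1)) k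
        ≤ A (p 0) (p 1) * tPow A k (p 1) (p (k+1)) := by
      exact mul_le_mul_of_nonneg_left (ih (fun t => p (t+1))) (hA _ _)
    refine h2.trans ?_
    exact le_fsup (fun m => A (p 0) m * tPow A k m (p (k+1))) (p 1)

lemma exists_path {A : Matrix (Fin n) (Fin n) ℝ} (hA : ∀ i j, 0 ≤ A i j) :
    ∀ (k : ℕ) (i j : Fin n), ∃ p : ℕ → Fin n,
      p 0 = i ∧ p (k+1) = j ∧ pw A p (k+1) = tPow A (k+1) i j := by
  intro k
  induction k with
  | zero =>
    intro i j
    refine ⟨fun t => if t = 0 then i else j, by simp, by simp, ?_⟩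
    rw [tPow_one hA]
    simp [pw]
  | succ k ih =>
    intro i j
    obtain ⟨m, hm⟩ := fsup_exists (fun m => A i m * tPow A (k+1) m j)
    obtain ⟨q, hq0, hqk, hqw⟩ := ih m j
    refine ⟨fun t => if t = 0 then i else q (t-1), by simp, by simpa using hqk, ?_⟩
    have h1 : pw A (fun t => if t = 0 then i else q (t-1)) (k+2)
        = (∏ t ∈ Finset.range (k+1),
            A (q t) (q (t+1))) * A i (q 0) := by
      unfold pw
      rw [Finset.prod_range_succ']
      simp
    rw [h1]
    show _ = tMul A (tPow A (k+1)) i j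
    unfold tMul
    rw [hm, hq0]
    show pw A q (k+1) * A i m = A i m * tPow A (k+1) m j
    rw [hqw]; ring

lemma ciSup_div_const (f : Fin n → ℝ) {c : ℝ} (hc : 0 < c) :
    (⨆ i, f i) / c = ⨆ i, f i / c := by
  obtain ⟨m, hm⟩ := Finite.exists_max f
  have h1 : (⨆ i, f i) = f m := le_antisymm (ciSup_le hm) (le_fsup f m)
  have h2 : (⨆ i, f i / c) = f m / c := by
    refine le_antisymm (ciSup_le fun i => ?_) (le_fsup (fun i => f i / c) m)
    exact (div_le_div_iff_of_pos_right hc).mpr (hm i)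
  rw [h1, h2]

lemma tPow_div {A : Matrix (Fin n) (Fin n) ℝ} {L : ℝ} (hL : 0 < L) :
    ∀ k i j, tPow (fun i j => A i j / L) k i j = tPow A k i j / L ^ k := by
  intro k
  induction k with
  | zero => intro i j; by_cases h : i = j <;> simp [tPow, h]
  | succ k ih =>
    intro i j
    show (⨆ m, (A i m / L) * tPow (fun i j => A i j / L) k m j) = _
    have h1 : ∀ m : Fin n, (A i m / L) * tPow (fun i j => A i j / L) k m j
        = (A i m * tPow A k m j) / L ^ (k+1) := by
      intro m
      rw [ih, div_mul_div_comm, ← pow_succ']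
    calc (⨆ m, (A i m / L) * tPow (fun i j => A i j / L) k m j)
        = ⨆ m, (A i m * tPow A k m j) / L ^ (k+1) := by
          exact iSup_congr h1
      _ = (⨆ m, A i m * tPow A k m j) / L ^ (k+1) :=
          (ciSup_div_const _ (pow_pos hL _)).symm
      _ = tPow A (k+1) i j / L ^ (k+1) := rfl

lemma splice {A : Matrix (Fin n) (Fin n) ℝ} (p : ℕ → Fin n) {t s k : ℕ}
    (hts : t < s) (hsk : s ≤ k) (hp : p t = p s) :
    ∃ q : ℕ → Fin n, q 0 = p 0 ∧ q (k - (s - t)) = p k ∧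
      pw A p k = pw A q (k - (s - t)) * pw A (fun r => p (t + r)) (s - t) := by
  set ℓ := s - t with hℓ
  have hts' : t + ℓ = s := by omega
  set q : ℕ → Fin n := fun r => if r < t then p r else p (r + ℓ) with hq
  have hq0 : q 0 = p 0 := by
    by_cases h : 0 < t
    · simp [hq, h]
    · have ht0 : t = 0 := by omega
      have : q 0 = p ℓ := by simp [hq, ht0]
      rw [this]
      have : p ℓ = p s := by congr 1; omega
      rw [this, ← hp, ht0]
  have hqk : q (k - ℓ) = p k := by
    have h1 : ¬ (k - ℓ < t) := by omega
    have h2 : k - ℓ + ℓ = k := by omega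
    simp only [hq, h1, if_false, h2]
  refine ⟨q, hq0, hqk, ?_⟩
  set a : ℕ → ℝ := fun r => A (p r) (p (r+1)) with ha
  set b : ℕ → ℝ := fun r => A (q r) (q (r+1)) with hb
  have hba : ∀ r < t, b r = a r := by
    intro r hr
    have h1 : q r = p r := by simp [hq, hr]
    have h2 : q (r+1) = p (r+1) := by
      by_cases h : r + 1 < t
      · simp [hq, h]
      · have hrt : r + 1 = t := by omega
        have : q (r+1) = p (r+1+ℓ) := by simp [hq, hrt]
        rw [this]
        have : p (r+1+ℓ) = p s := by congr 1; omega
        rw [this, ← hp, hrt]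
    simp [hb, ha, h1, h2]
  have hba2 : ∀ r, b (t + r) = a (s + r) := by
    intro r
    have h1 : ¬ (t + r < t) := by omega
    have h2 : ¬ (t + r + 1 < t) := by omega
    have e1 : t + r + ℓ = s + r := by omega
    have e2 : t + r + 1 + ℓ = s + r + 1 := by omega
    simp only [hb, ha, hq, h1, h2, if_false, e1, e2]
  have hk : k = t + (ℓ + (k - s)) := by omega
  have hkl : k - ℓ = t + (k - s) := by omega
  have hpw : pw A p k = ((∏ r ∈ Finset.range t, a r) *
      ((∏ r ∈ Finset.range ℓ, a (t + r)) * ∏ r ∈ Finset.range (k-s), a (t + (ℓ + r)))) := by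
    have h0 : pw A p k = ∏ r ∈ Finset.range (t + (ℓ + (k - s))), a r := by
      rw [← hk]; rfl
    rw [h0, Finset.prod_range_add, Finset.prod_range_add]
  have hqw : pw A q (k - ℓ) = (∏ r ∈ Finset.range t, a r) *
      ∏ r ∈ Finset.range (k-s), a (s + r) := by
    unfold pw
    rw [hkl, Finset.prod_range_add]
    congr 1
    · exact Finset.prod_congr rfl (fun r hr => hba r (Finset.mem_range.mp hr))
    · exact Finset.prod_congr rfl (fun r _ => hba2 r)
  have hcyc : pw A (fun r => p (t + r)) ℓ = ∏ r ∈ Finset.range ℓ, a (t + r) := by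
    unfold pw
    exact Finset.prod_congr rfl (fun r _ => rfl)
  rw [hpw, hqw, hcyc]
  have : ∀ r, a (t + (ℓ + r)) = a (s + r) := fun r => by congr 1; omega
  rw [Finset.prod_congr rfl (fun r _ => this r)]
  ring

lemma bounded_powers {C : Matrix (Fin n) (Fin n) ℝ} (hC : ∀ i j, 0 < C i j)
    (hCtr : ∀ k, k < n → tTr (tPow C (k+1)) ≤ 1) :
    ∀ k i j, tPow C k i j ≤ ⨆ m : Fin n, ⨆ j', tPow C (m:ℕ) i j' := by
  intro k
  induction k using Nat.strong_induction_on with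
  | _ k IH =>
  intro i j
  by_cases hk : k < n
  · calc tPow C k i j ≤ ⨆ j', tPow C k i j' := le_fsup _ j
      _ ≤ ⨆ m : Fin n, ⨆ j', tPow C (m:ℕ) i j' :=
        le_fsup (fun m : Fin n => ⨆ j', tPow C (m:ℕ) i j') ⟨k, hk⟩
  · have hn : 0 < n := Fin.pos_iff_nonempty.mpr inferInstance
    obtain ⟨k0, rfl⟩ : ∃ k0, k = k0 + 1 := ⟨k-1, by omega⟩
    obtain ⟨p, hp0, hpk, hpw⟩ := exists_path (fun i j => (hC i j).le) k0 i j
    obtain ⟨r1, r2, hne, heq⟩ :=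
      Fintype.exists_ne_map_eq_of_card_lt (fun r : Fin (n+1) => p (r:ℕ)) (by simp)
    set t := min (r1:ℕ) (r2:ℕ) with htdef
    set s := max (r1:ℕ) (r2:ℕ) with hsdef
    have hr1 : (r1:ℕ) ≤ n := Nat.lt_succ_iff.mp r1.isLt
    have hr2 : (r2:ℕ) ≤ n := Nat.lt_succ_iff.mp r2.isLt
    have hts : t < s := by
      have : (r1:ℕ) ≠ (r2:ℕ) := fun h => hne (Fin.ext h)
      omega
    have hsn : s ≤ n := by omega
    have hsk : s ≤ k0 + 1 := by omega
    have hpts : p t = p s := by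
      rcases le_total (r1:ℕ) (r2:ℕ) with h | h
      · rw [htdef, hsdef, min_eq_left h, max_eq_right h]; exact heq
      · rw [htdef, hsdef, min_eq_right h, max_eq_left h]; exact heq.symm
    obtain ⟨q, hq0, hqk, hqe⟩ := splice (A := C) p hts hsk hpts
    obtain ⟨ℓ0, hℓ⟩ : ∃ ℓ0, s - t = ℓ0 + 1 := ⟨s - t - 1, by omega⟩
    have hcyc : pw C (fun r => p (t + r)) (s - t) ≤ 1 := by
      have h1 := pw_le_tPow (fun i j => (hC i j).le) (s - t) (fun r => p (t + r))
      rw [Nat.add_zero, show t + (s-t) = s from by omega, ← hpts] at h1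
      refine h1.trans ?_
      have h2 : tPow C (s-t) (p t) (p t) ≤ tTr (tPow C (s-t)) :=
        le_fsup (fun m => tPow C (s-t) m m) (p t)
      refine h2.trans ?_
      rw [hℓ]
      exact hCtr ℓ0 (by omega)
    have h4 : pw C q (k0+1 - (s-t)) ≤ tPow C (k0+1-(s-t)) i j := by
      have h := pw_le_tPow (fun i j => (hC i j).le) (k0+1-(s-t)) q
      rw [hq0, hqk, hp0, hpk] at h
      exact h
    have h5 := IH (k0+1-(s-t)) (by omega) i j
    rw [← hpw, hqe]
    calc pw C q (k0+1 - (s-t)) * pw C (fun r => p (t + r)) (s - t)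
        ≤ pw C q (k0+1 - (s-t)) * 1 :=
          mul_le_mul_of_nonneg_left hcyc (pw_pos hC q _).le
      _ = pw C q (k0+1 - (s-t)) := mul_one _
      _ ≤ tPow C (k0+1-(s-t)) i j := h4
      _ ≤ _ := h5

lemma lower_bound {A : Matrix (Fin n) (Fin n) ℝ} (hA : ∀ i j, 0 < A i j)
    {L E : ℝ} (hL0 : 0 < L)
    (y : Fin n → ℝ) (hy : ∀ i, 0 < y i)
    (hE : ∀ i j, |Real.log (A i j) - Real.log (y i / y j)| ≤ E)
    (hLdef : L = ⨆ k : Fin n, (tTr (tPow A ((k:ℕ)+1))) ^ ((1:ℝ)/((k:ℕ)+1))) :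
    Real.log L ≤ E := by
  have hA' : ∀ i j, 0 ≤ A i j := fun i j => (hA i j).le
  have hexp : ∀ i j, A i j ≤ Real.exp E * (y i / y j) := by
    intro i j
    have h1 : Real.log (A i j) - Real.log (y i / y j) ≤ E :=
      (le_abs_self _).trans (hE i j)
    have h2 : Real.log (A i j) ≤ E + Real.log (y i / y j) := by linarith
    calc A i j = Real.exp (Real.log (A i j)) := (Real.exp_log (hA i j)).symm
      _ ≤ Real.exp (E + Real.log (y i / y j)) := Real.exp_le_exp.mpr h2
      _ = Real.exp E * (y i / y j) := by
          rw [Real.exp_add, Real.exp_log (div_pos (hy i) (hy j))]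
  have hPB : ∀ k i j, tPow A (k+1) i j ≤ (Real.exp E)^(k+1) * (y i / y j) := by
    intro k
    induction k with
    | zero =>
      intro i j
      rw [tPow_one hA', pow_one]
      exact hexp i j
    | succ k ih =>
      intro i j
      apply ciSup_le
      intro m
      calc A i m * tPow A (k+1) m j
          ≤ (Real.exp E * (y i / y m)) * ((Real.exp E)^(k+1) * (y m / y j)) :=
            mul_le_mul (hexp i m) (ih m j) (tPow_nonneg hA' (k+1) m j)
              (mul_nonneg (Real.exp_pos E).le (div_pos (hy i) (hy m)).le)
        _ = (Real.exp E)^(k+2) * (y i / y j) := by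
            have h1 := (hy m).ne'
            have h2 := (hy j).ne'
            field_simp
            ring
  have hLle : L ≤ Real.exp E := by
    rw [hLdef]
    apply ciSup_le
    intro k
    have ht : tTr (tPow A ((k:ℕ)+1)) ≤ (Real.exp E)^((k:ℕ)+1) := by
      apply ciSup_le
      intro i
      have := hPB (k:ℕ) i i
      rwa [div_self (hy i).ne', mul_one] at this
    have ht0 : 0 ≤ tTr (tPow A ((k:ℕ)+1)) := by
      refine le_trans (tPow_nonneg hA' ((k:ℕ)+1) (Classical.arbitrary (Fin n))
        (Classical.arbitrary (Fin n))) ?_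
      exact le_fsup (fun m => tPow A ((k:ℕ)+1) m m) _
    calc (tTr (tPow A ((k:ℕ)+1))) ^ ((1:ℝ)/((k:ℕ)+1))
        ≤ ((Real.exp E)^((k:ℕ)+1)) ^ ((1:ℝ)/((k:ℕ)+1)) :=
          Real.rpow_le_rpow ht0 ht (by positivity)
      _ = Real.exp E := by
          rw [← Real.rpow_natCast (Real.exp E) ((k:ℕ)+1), ← Real.rpow_mul (Real.exp_pos E).le]
          rw [show (((k:ℕ)+1 : ℕ) : ℝ) * ((1:ℝ)/((k:ℕ)+1)) = 1 by push_cast; field_simp]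
          exact Real.rpow_one _
  calc Real.log L ≤ Real.log (Real.exp E) := Real.log_le_log hL0 hLle
    _ = E := Real.log_exp E

end helpers

/-- For a symmetrically reciprocal positive matrix `A`, the minimum over positive
vectors `x` of the log-Chebyshev error `max_{i,j} |log a_ij − log (x_i / x_j)|`
is attained and equals `log λ(A)`, where `λ(A)` is the tropical spectral radius. -/
theorem log_chebyshev_min_eq_log_tRadius (n : ℕ) (hn : 1 ≤ n)
    (A : Matrix (Fin n) (Fin n) ℝ) (hA : ∀ i j, 0 < A i j)
    (hrec : ∀ i j, A j i = 1 / A i j) :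
    ∃ x : Fin n → ℝ, (∀ i, 0 < x i) ∧
      (⨆ i, ⨆ j, |Real.log (A i j) - Real.log (x i / x j)|) = Real.log (tRadius A) ∧
      ∀ y : Fin n → ℝ, (∀ i, 0 < y i) →
        (⨆ i, ⨆ j, |Real.log (A i j) - Real.log (x i / x j)|) ≤
          (⨆ i, ⨆ j, |Real.log (A i j) - Real.log (y i / y j)|) := by
  haveI : Nonempty (Fin n) := Fin.pos_iff_nonempty.mp (by omega)
  have hA' : ∀ i j, 0 ≤ A i j := fun i j => (hA i j).le
  have hdiag : ∀ i, A i i = 1 := by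
    intro i
    have h := hrec i i
    have h2 : A i i * A i i = 1 := by
      nth_rewrite 1 [h]
      exact one_div_mul_cancel (hA i i).ne'
    nlinarith [hA i i]
  set L := tRadius A with hLdef
  -- 1 ≤ L
  have h1L : (1:ℝ) ≤ L := by
    have h := le_fsup
      (fun k : Fin n => (tTr (tPow A ((k:ℕ)+1))) ^ ((1:ℝ)/((k:ℕ)+1))) ⟨0, by omega⟩
    have e1 : tTr (tPow A 1) = 1 := by
      rw [tPow_one hA']
      unfold tTr
      calc (⨆ i, A i i) = ⨆ _ : Fin n, (1:ℝ) := iSup_congr hdiag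
        _ = 1 := ciSup_const
    refine le_trans ?_ h
    have h0 : ((⟨0, by omega⟩ : Fin n) : ℕ) = 0 := rfl
    simp only [h0]
    rw [show (0:ℕ)+1 = 1 from rfl, e1]
    norm_num
  have hL0 : (0:ℝ) < L := lt_of_lt_of_le one_pos h1L
  -- trace bound
  have hTr : ∀ k, k < n → tTr (tPow A (k+1)) ≤ L ^ (k+1) := by
    intro k hk
    have h1 : (tTr (tPow A (k+1))) ^ ((1:ℝ)/((k:ℕ)+1)) ≤ L := by
      have := le_fsup
        (fun m : Fin n => (tTr (tPow A ((m:ℕ)+1))) ^ ((1:ℝ)/((m:ℕ)+1))) ⟨k, hk⟩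
      exact this
    have ht0 : 0 < tTr (tPow A (k+1)) := by
      refine lt_of_lt_of_le (tPow_pos hA k (Classical.arbitrary (Fin n))
        (Classical.arbitrary (Fin n))) ?_
      exact le_fsup (fun m => tPow A (k+1) m m) _
    calc tTr (tPow A (k+1))
        = ((tTr (tPow A (k+1))) ^ ((1:ℝ)/((k:ℕ)+1))) ^ (k+1) := by
          rw [← Real.rpow_natCast ((tTr (tPow A (k+1))) ^ ((1:ℝ)/((k:ℕ)+1))) (k+1),
            ← Real.rpow_mul ht0.le]
          rw [show ((1:ℝ)/((k:ℕ)+1)) * ((k+1 : ℕ) : ℝ) = 1 by push_cast; field_simp]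
          exact (Real.rpow_one _).symm
      _ ≤ L ^ (k+1) := pow_le_pow_left₀ (Real.rpow_nonneg ht0.le _) h1 (k+1)
  -- scaled matrix
  set C : Matrix (Fin n) (Fin n) ℝ := fun i j => A i j / L with hCdef
  have hC : ∀ i j, 0 < C i j := fun i j => div_pos (hA i j) hL0
  have hCtr : ∀ k, k < n → tTr (tPow C (k+1)) ≤ 1 := by
    intro k hk
    apply ciSup_le
    intro i
    rw [show tPow C (k+1) i i = tPow A (k+1) i i / L ^ (k+1) from tPow_div hL0 (k+1) i i]
    rw [div_le_one (by positivity)]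
    refine le_trans ?_ (hTr k hk)
    exact le_fsup (fun m => tPow A (k+1) m m) i
  -- the optimal vector
  set S : Fin n → ℝ := fun i => ⨆ m : Fin n, ⨆ j', tPow C (m:ℕ) i j' with hSdef
  have hS1 : ∀ i, (1:ℝ) ≤ S i := by
    intro i
    have h1 : tPow C 0 i i = 1 := by simp [tPow]
    calc (1:ℝ) = tPow C 0 i i := h1.symm
      _ ≤ ⨆ j', tPow C 0 i j' := le_fsup _ i
      _ ≤ S i := le_fsup (fun m : Fin n => ⨆ j', tPow C (m:ℕ) i j') ⟨0, by omega⟩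
  have hSpos : ∀ i, 0 < S i := fun i => lt_of_lt_of_le one_pos (hS1 i)
  have hstep : ∀ i j, C i j * S j ≤ S i := by
    intro i j
    have h1 : S j ≤ S i / C i j := by
      apply ciSup_le; intro m
      apply ciSup_le; intro j'
      rw [le_div_iff₀ (hC i j)]
      calc tPow C (m:ℕ) j j' * C i j = C i j * tPow C (m:ℕ) j j' := mul_comm _ _
        _ ≤ tPow C ((m:ℕ)+1) i j' := le_fsup (fun w => C i w * tPow C (m:ℕ) w j') j
        _ ≤ S i := bounded_powers hC hCtr ((m:ℕ)+1) i j'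
    calc C i j * S j ≤ C i j * (S i / C i j) :=
        mul_le_mul_of_nonneg_left h1 (hC i j).le
      _ = S i := mul_div_cancel₀ _ (hC i j).ne'
  have hAS : ∀ i j, A i j * S j ≤ L * S i := by
    intro i j
    have h := hstep i j
    rw [hCdef] at h
    have h2 : A i j / L * S j = A i j * S j / L := by ring
    rw [h2, div_le_iff₀ hL0] at h
    linarith [h]
  -- pointwise log bound for x = S
  have hlogbd : ∀ i j, |Real.log (A i j) - Real.log (S i / S j)| ≤ Real.log L := by
    intro i j
    rw [abs_le]
    constructor
    · -- lower: log (S i / S j) ≤ log L + log A i j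
      have h := hAS j i
      rw [hrec i j] at h
      have h2 : S i / S j ≤ L * A i j := by
        rw [div_le_iff₀ (hSpos j)]
        rw [div_mul_eq_mul_div, div_le_iff₀ (hA i j)] at h
        nlinarith [h]
      have h3 : Real.log (S i / S j) ≤ Real.log L + Real.log (A i j) := by
        calc Real.log (S i / S j) ≤ Real.log (L * A i j) :=
            Real.log_le_log (div_pos (hSpos i) (hSpos j)) h2
          _ = Real.log L + Real.log (A i j) := Real.log_mul hL0.ne' (hA i j).ne'
      linarith
    · -- upper: log A i j ≤ log L + log (S i / S j)
      have h := hAS i j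
      have h2 : A i j ≤ L * (S i / S j) := by
        rw [mul_div_assoc'] at *
        rw [le_div_iff₀ (hSpos j)]
        linarith [h]
      have h3 : Real.log (A i j) ≤ Real.log L + Real.log (S i / S j) := by
        calc Real.log (A i j) ≤ Real.log (L * (S i / S j)) := Real.log_le_log (hA i j) h2
          _ = _ := Real.log_mul hL0.ne' (div_pos (hSpos i) (hSpos j)).ne'
      linarith
  have hupper : (⨆ i, ⨆ j, |Real.log (A i j) - Real.log (S i / S j)|) ≤ Real.log L := by
    apply ciSup_le; intro i
    apply ciSup_le; intro j
    exact hlogbd i j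
  have hlower : ∀ y : Fin n → ℝ, (∀ i, 0 < y i) →
      Real.log L ≤ ⨆ i, ⨆ j, |Real.log (A i j) - Real.log (y i / y j)| := by
    intro y hy
    refine lower_bound hA hL0 y hy (fun i j => ?_) hLdef
    calc |Real.log (A i j) - Real.log (y i / y j)|
        ≤ ⨆ j', |Real.log (A i j') - Real.log (y i / y j')| :=
          le_fsup (fun j' => |Real.log (A i j') - Real.log (y i / y j')|) j
      _ ≤ _ := le_fsup (fun i' => ⨆ j', |Real.log (A i' j') - Real.log (y i' / y j')|) i
  have heq : (⨆ i, ⨆ j, |Real.log (A i j) - Real.log (S i / S j)|) = Real.log L :=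
    le_antisymm hupper (hlower S hSpos)
  exact ⟨S, hSpos, heq, fun y hy => le_trans heq.le (hlower y hy)⟩
end

section
/- Let B = (b_ij) be an n×m matrix with positive real entries. Then the supremum over all positive vectors u ∈ ℝ^m of the Hilbert seminorm K(B⊗u) equals Δ = max_{1≤j≤m} (max_i b_ij)/(min_i b_ij), and the supremum is attained by some positive u. -/
/-- Max-times matrix-vector product: `(B ⊗ u)_i = max_j b_ij · u_j`. -/
noncomputable def tMV {n m : ℕ} (B : Matrix (Fin n) (Fin m) ℝ) (u : Fin m → ℝ) : Fin n → ℝ :=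
  fun i => ⨆ j, B i j * u j

/-- Hilbert seminorm of a positive vector: `K(x) = (max_i x_i) · (max_j 1/x_j)`. -/
noncomputable def hilbK {n : ℕ} (x : Fin n → ℝ) : ℝ :=
  (⨆ i, x i) * (⨆ j, (x j)⁻¹)

lemma fin_csSup_attained {k : ℕ} (hk : 1 ≤ k) (f : Fin k → ℝ) :
    ∃ i, (⨆ j, f j) = f i ∧ ∀ j, f j ≤ f i := by
  haveI : Nonempty (Fin k) := ⟨⟨0, hk⟩⟩
  obtain ⟨i, hi⟩ := Finite.exists_max f
  exact ⟨i, le_antisymm (ciSup_le hi) (le_ciSup (Finite.bddAbove_range f) i), hi⟩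

lemma fin_csInf_attained {k : ℕ} (hk : 1 ≤ k) (f : Fin k → ℝ) :
    ∃ i, (⨅ j, f j) = f i ∧ ∀ j, f i ≤ f j := by
  haveI : Nonempty (Fin k) := ⟨⟨0, hk⟩⟩
  obtain ⟨i, hi⟩ := Finite.exists_min f
  exact ⟨i, le_antisymm (ciInf_le (Finite.bddBelow_range f) i) (le_ciInf hi), hi⟩

/-- For a positive `n × m` matrix `B`, the supremum over positive vectors `u`
of the Hilbert seminorm `K(B ⊗ u)` equals
`Δ = max_j (max_i b_ij) / (min_i b_ij)`, and the supremum is attained. -/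
theorem max_hilbert_seminorm_over_image (n m : ℕ) (hn : 1 ≤ n) (hm : 1 ≤ m)
    (B : Matrix (Fin n) (Fin m) ℝ) (hB : ∀ i j, 0 < B i j)
    (Δ : ℝ) (hΔ : Δ = ⨆ j, (⨆ i, B i j) / (⨅ i, B i j)) :
    IsGreatest {v : ℝ | ∃ u : Fin m → ℝ, (∀ j, 0 < u j) ∧ v = hilbK (tMV B u)} Δ := by
  haveI hnn : Nonempty (Fin n) := ⟨⟨0, hn⟩⟩
  haveI hmn : Nonempty (Fin m) := ⟨⟨0, hm⟩⟩
  set g : Fin m → ℝ := fun j => (⨆ i, B i j) / (⨅ i, B i j) with hgdef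
  constructor
  · -- membership: supremum attained
    obtain ⟨j0, hj0, _⟩ := fin_csSup_attained hm g
    obtain ⟨imin, himin, himinle⟩ := fin_csInf_attained hn (fun i => B i j0)
    obtain ⟨⟨iM, jM⟩, hM⟩ := Finite.exists_max (fun p : Fin n × Fin m => B p.1 p.2)
    set M := B iM jM with hMdef
    have hMpos : 0 < M := hB _ _
    have hc : 0 < B imin j0 := hB _ _
    set ε := B imin j0 / M with hε
    have hεpos : 0 < ε := div_pos hc hMpos
    set u : Fin m → ℝ := fun j => if j = j0 then 1 else ε with hudef
    have hupos : ∀ j, 0 < u j := by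
      intro j
      by_cases h : j = j0 <;> simp [hudef, h, hεpos]
    refine ⟨u, hupos, ?_⟩
    have hx : ∀ i, tMV B u i = B i j0 := by
      intro i
      apply le_antisymm
      · apply ciSup_le
        intro j
        by_cases h : j = j0
        · simp [hudef, h]
        · simp only [hudef, if_neg h]
          calc B i j * ε ≤ M * ε := by
                have := hM (i, j); exact mul_le_mul_of_nonneg_right this hεpos.le
            _ = B imin j0 := by rw [hε]; field_simp
            _ ≤ B i j0 := himinle i
      · show B i j0 ≤ ⨆ j, B i j * u j
        have h := le_ciSup (Finite.bddAbove_range (fun j => B i j * u j)) j0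
        simpa [hudef] using h
    have hxfun : tMV B u = fun i => B i j0 := funext hx
    have hsupinv : (⨆ i, (B i j0)⁻¹) = (B imin j0)⁻¹ := by
      apply le_antisymm
      · apply ciSup_le
        intro i
        exact inv_anti₀ hc (himinle i)
      · exact le_ciSup (f := fun i => (B i j0)⁻¹) (Finite.bddAbove_range _) imin
    rw [hxfun]
    show Δ = hilbK (fun i => B i j0)
    rw [hΔ, show iSup g = g j0 from hj0]
    simp only [hilbK]
    rw [hsupinv]
    show (⨆ i, B i j0) / (⨅ i, B i j0) = _
    rw [himin, div_eq_mul_inv]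
  · -- upper bound
    rintro v ⟨u, hu, rfl⟩
    set x := tMV B u with hxdef
    have hxpos : ∀ i, 0 < x i := by
      intro i
      have h0 : (0:ℝ) < B i (Classical.arbitrary _) * u (Classical.arbitrary _) :=
        mul_pos (hB _ _) (hu _)
      exact lt_of_lt_of_le h0
        (le_ciSup (Finite.bddAbove_range (fun j => B i j * u j)) (Classical.arbitrary _))
    obtain ⟨i1, hi1, hi1max⟩ := fin_csSup_attained hn x
    obtain ⟨i2, hi2, hi2min⟩ := fin_csInf_attained hn x
    obtain ⟨j1, hj1, _⟩ := fin_csSup_attained hm (fun j => B i1 j * u j)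
    have hsupinv : (⨆ j, (x j)⁻¹) = (x i2)⁻¹ := by
      apply le_antisymm
      · exact ciSup_le fun i => inv_anti₀ (hxpos i2) (hi2min i)
      · exact le_ciSup (f := fun j => (x j)⁻¹) (Finite.bddAbove_range _) i2
    have hxi1 : x i1 = B i1 j1 * u j1 := by
      rw [hxdef]; exact hj1
    have hxi2 : B i2 j1 * u j1 ≤ x i2 := by
      rw [hxdef]
      exact le_ciSup (Finite.bddAbove_range (fun j => B i2 j * u j)) j1
    have hinf_pos : 0 < ⨅ i, B i j1 := by
      obtain ⟨i', hi', _⟩ := fin_csInf_attained hn (fun i => B i j1)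
      rw [hi']; exact hB _ _
    have hKval : hilbK x = x i1 * (x i2)⁻¹ := by
      rw [hilbK, hi1, hsupinv]
    have hchain : hilbK x ≤ g j1 := by
      rw [hKval, ← div_eq_mul_inv]
      calc x i1 / x i2 ≤ (B i1 j1 * u j1) / (B i2 j1 * u j1) := by
            rw [hxi1]
            apply div_le_div_of_nonneg_left (mul_pos (hB _ _) (hu _)).le
              (mul_pos (hB _ _) (hu _)) hxi2
        _ = B i1 j1 / B i2 j1 := mul_div_mul_right _ _ (hu j1).ne'
        _ ≤ (⨆ i, B i j1) / (⨅ i, B i j1) := by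
            exact div_le_div₀ ((hB i1 j1).le.trans (le_ciSup (Finite.bddAbove_range (fun i => B i j1)) i1))
              (le_ciSup (Finite.bddAbove_range (fun i => B i j1)) i1) hinf_pos
              (ciInf_le (Finite.bddBelow_range (fun i => B i j1)) i2)
        _ = g j1 := rfl
    have : g j1 ≤ Δ := by
      rw [hΔ]
      exact le_ciSup (Finite.bddAbove_range g) j1
    exact hchain.trans this
end
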